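/- arXiv:1201.4709 — 3 statements merged into one kernel-verified Lean document; each statement's English description precedes it below -/
import Mathlib

section
/- For every c > 0 and every z ∈ ℝ, the (complex-valued) integral ∫_ℝ exp((c+is)³/3 − (c+is)z) ds converges absolutely and equals 2π · Ai(z); that is, Ai(z) = (2πi)^{-1} ∫_{Γ_c} e^{u³/3 − uz} du, where Γ_c = {c + iy : y ∈ ℝ} is oriented upwards. -/
/-!
`u ↦ exp (u³/3 - u z)` is entire. By Cauchy's theorem on the rectangles with corners `± i b` and
`c ± i b`, the integral over `[c - i b, c + i b]` differs from the one over `[-i b, i b]` by the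
two horizontal sides; on these `|exp (u³/3 - u z)| ≤ exp (-x (b² - c²/3 - |z|))` at `u = x ± i b`,
so they are `O(1/b²)`. On the imaginary axis the integrand is `exp (-i (y³/3 + z y))`, whose even
part is `cos (y³/3 + z y)`, so the integral over `[-i b, i b]` is `2 ∫₀ᵇ cos (t³/3 + z t) dt`,
which tends to `2π Ai z`. On `Re u = c > 0` the modulus is `exp (c³/3 - c z - c s²)`, which gives
absolute convergence.
-/

open MeasureTheory Filter Complex Topology intervalIntegral

section RectangleContour

variable {E : Type*} [NormedAddCommGroup E] [NormedSpace ℂ E]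

theorem integral_vertical_sub_eq_smul_integral_horizontal {f : ℂ → E}
    (hf : Differentiable ℂ f) (a c b : ℝ) :
    (∫ y in -b..b, f (c + y * I)) - (∫ y in -b..b, f (a + y * I))
      = (-I) • ((∫ x in a..c, f (x + b * I)) - ∫ x in a..c, f (x + (-b : ℝ) * I)) := by
  have h := integral_boundary_rect_eq_zero_of_differentiableOn f ⟨a, -b⟩ ⟨c, b⟩
    hf.differentiableOn
  simp only at h
  have hI : I • ((∫ y in -b..b, f (c + y * I)) - ∫ y in -b..b, f (a + y * I))
      = (∫ x in a..c, f (x + b * I)) - ∫ x in a..c, f (x + (-b : ℝ) * I) := by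
    rw [smul_sub]
    linear_combination (norm := module) h
  rw [← hI, smul_smul, neg_mul, I_mul_I, neg_neg, one_smul]

theorem tendsto_integral_vertical_sub_of_tendsto_horizontal {f : ℂ → E}
    (hf : Differentiable ℂ f) (a c : ℝ)
    (hhor : Tendsto (fun y : ℝ => ∫ x in a..c, f (x + y * I)) (cocompact ℝ) (𝓝 0)) :
    Tendsto (fun b : ℝ => (∫ y in -b..b, f (c + y * I)) - ∫ y in -b..b, f (a + y * I))
      atTop (𝓝 0) := by
  have htop := hhor.comp (tendsto_id.mono_right atTop_le_cocompact)
  have hbot := hhor.comp (tendsto_neg_atTop_atBot.mono_right atBot_le_cocompact)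
  simpa [integral_vertical_sub_eq_smul_integral_horizontal hf a c] using
    (htop.sub hbot).const_smul (-I)

end RectangleContour

noncomputable def airyIntegrand (z : ℝ) (u : ℂ) : ℂ := exp (u ^ 3 / 3 - u * z)

namespace airyIntegrand

theorem differentiable (z : ℝ) : Differentiable ℂ (airyIntegrand z) := by
  unfold airyIntegrand
  fun_prop

theorem continuous_line (z : ℝ) (a b : ℂ) : Continuous fun t : ℝ => airyIntegrand z (a + t * b) :=
  (differentiable z).continuous.comp (by fun_prop)

theorem norm_eq (z x y : ℝ) :
    ‖airyIntegrand z (x + y * I)‖ = Real.exp (x ^ 3 / 3 - x * y ^ 2 - x * z) := by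
  rw [airyIntegrand, norm_exp]
  congr 1
  simp [pow_succ]
  ring

theorem integrable_vertical {c : ℝ} (hc : 0 < c) (z : ℝ) :
    Integrable fun s : ℝ => airyIntegrand z (c + s * I) := by
  refine ((integrable_exp_neg_mul_sq hc).const_mul (Real.exp (c ^ 3 / 3 - c * z))).mono'
    (continuous_line z c I).aestronglyMeasurable (ae_of_all _ fun s => ?_)
  rw [norm_eq, ← Real.exp_add]
  exact le_of_eq (by ring_nf)

theorem add_neg_imaginary (z y : ℝ) :
    airyIntegrand z (y * I) + airyIntegrand z ((-y : ℝ) * I)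
      = 2 * Real.cos (y ^ 3 / 3 + z * y) := by
  have hI3 : I ^ 3 = -I := by rw [pow_succ, I_sq, neg_one_mul]
  rw [add_comm, ofReal_cos, two_cos, airyIntegrand, airyIntegrand]
  congr 2 <;> push_cast <;> ring_nf <;> rw [hI3] <;> ring

theorem integral_imaginary (z b : ℝ) :
    ∫ y in -b..b, airyIntegrand z (y * I)
      = ((2 * ∫ t in (0 : ℝ)..b, Real.cos (t ^ 3 / 3 + z * t) : ℝ) : ℂ) := by
  have hcont := continuous_line z 0 I
  simp only [zero_add] at hcont
  have hneg : Continuous fun t : ℝ => airyIntegrand z ((-t : ℝ) * I) := hcont.comp continuous_neg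
  rw [← integral_add_adjacent_intervals (b := 0) (hcont.intervalIntegrable _ _)
    (hcont.intervalIntegrable _ _), add_comm, ← neg_zero, ← integral_comp_neg, neg_zero,
    ← integral_add (hcont.intervalIntegrable _ _)
      (hneg.intervalIntegrable _ _)]
  simp_rw [add_neg_imaginary, intervalIntegral.integral_const_mul, intervalIntegral.integral_ofReal,
    ofReal_mul, ofReal_ofNat]

theorem norm_integral_horizontal_le {c : ℝ} (hc : 0 ≤ c) (z y : ℝ)
    (hM : 0 < y ^ 2 - c ^ 2 / 3 - |z|) :
    ‖∫ x in (0 : ℝ)..c, airyIntegrand z (x + y * I)‖ ≤ 1 / (y ^ 2 - c ^ 2 / 3 - |z|) := by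
  set M := y ^ 2 - c ^ 2 / 3 - |z| with hM_def
  have hpointwise : ∀ x ∈ Set.Icc 0 c, ‖airyIntegrand z (x + y * I)‖ ≤ Real.exp (-M * x) := by
    rintro x ⟨hx0, hxc⟩
    -- `x ^ 3 / 3 - x * z ≤ x * (c ^ 2 / 3 + |z|)` on `[0, c]`
    rw [norm_eq, Real.exp_le_exp]
    nlinarith [hM_def, neg_abs_le z, mul_le_mul hxc hxc hx0 hc]
  calc ‖∫ x in (0 : ℝ)..c, airyIntegrand z (x + y * I)‖
      ≤ ∫ x in (0 : ℝ)..c, Real.exp (-M * x) :=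
        norm_integral_le_of_norm_le hc
          (ae_of_all _ fun x hx => hpointwise x (Set.Ioc_subset_Icc_self hx))
          (Continuous.intervalIntegrable (by fun_prop) _ _)
    _ = (1 - Real.exp (-M * c)) / M := by
        rw [integral_comp_mul_left (fun x => Real.exp x) (neg_ne_zero.2 hM.ne'), integral_exp,
          mul_zero, Real.exp_zero, smul_eq_mul]
        field_simp
        ring
    _ ≤ 1 / M := by gcongr; linarith [Real.exp_pos (-M * c)]

theorem tendsto_integral_horizontal {c : ℝ} (hc : 0 ≤ c) (z : ℝ) :
    Tendsto (fun y : ℝ => ∫ x in (0 : ℝ)..c, airyIntegrand z (x + y * I)) (cocompact ℝ) (𝓝 0) := by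
  have hM : Tendsto (fun y : ℝ => y ^ 2 - c ^ 2 / 3 - |z|) (cocompact ℝ) atTop := by
    refine tendsto_atTop_add_const_right _ _ (tendsto_atTop_add_const_right _ _ ?_)
    simpa only [Function.comp_def, Real.norm_eq_abs, sq_abs] using
      (tendsto_pow_atTop two_ne_zero).comp (tendsto_norm_cocompact_atTop (E := ℝ))
  refine squeeze_zero_norm' ?_ ((tendsto_const_nhds (x := (1 : ℝ))).div_atTop hM)
  filter_upwards [hM.eventually_gt_atTop 0] with y hy
  exact norm_integral_horizontal_le hc z y hy

end airyIntegrand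

/-- For every `c > 0` and every `z ∈ ℝ`, the complex integral
`∫_ℝ exp((c+is)³/3 − (c+is)z) ds` converges absolutely and equals `2π · Ai(z)`. -/
theorem airy_contour_integral
    (Ai : ℝ → ℝ)
    (hAi : ∀ x : ℝ, Tendsto (fun b : ℝ => ∫ t in (0:ℝ)..b, Real.cos (t ^ 3 / 3 + x * t))
      atTop (nhds (Real.pi * Ai x)))
    (c : ℝ) (hc : 0 < c) (z : ℝ) :
    Integrable (fun s : ℝ =>
        Complex.exp (((c : ℂ) + (s : ℂ) * Complex.I) ^ 3 / 3
          - ((c : ℂ) + (s : ℂ) * Complex.I) * (z : ℂ))) ∧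
    (∫ s : ℝ,
        Complex.exp (((c : ℂ) + (s : ℂ) * Complex.I) ^ 3 / 3
          - ((c : ℂ) + (s : ℂ) * Complex.I) * (z : ℂ)))
      = ((2 * Real.pi * Ai z : ℝ) : ℂ) := by
  have hint := airyIntegrand.integrable_vertical hc z
  refine ⟨hint, tendsto_nhds_unique (intervalIntegral_tendsto_integral hint
    tendsto_neg_atTop_atBot tendsto_id) ?_⟩
  have himag : Tendsto (fun b : ℝ => ∫ y in -b..b, airyIntegrand z (((0 : ℝ) : ℂ) + y * I)) atTop
      (𝓝 ((2 * Real.pi * Ai z : ℝ) : ℂ)) := by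
    simp_rw [ofReal_zero, zero_add, airyIntegrand.integral_imaginary, mul_assoc]
    exact (continuous_ofReal.tendsto _).comp ((hAi z).const_mul 2)
  have hsum := (tendsto_integral_vertical_sub_of_tendsto_horizontal
    (airyIntegrand.differentiable z) 0 c (airyIntegrand.tendsto_integral_horizontal hc.le z)).add
    himag
  simp only [sub_add_cancel, zero_add] at hsum
  exact hsum
end

section
/- There exists a constant C > 0 such that for every β ∈ (0, 1], ∫_ℝ e^{βu} Ai(u)² du ≤ C · β^{−1/2} (in particular this integral is finite for every β > 0). -/
open MeasureTheory Filter

/-!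
Write `F x b = ∫₀ᵇ cos (t³/3 + x t) dt`, so that `π Ai x = lim_{b → ∞} F x b`; bounds on `F x b`
uniform in `b` bound `Ai x`. The phase has derivative `t² + x`, increasing for `t ≥ 0`, so van der
Corput's lemma (integrate by parts against `1 / φ'`) bounds the integral over any interval on which
`|t² + x| ≥ δ` by `3 / δ`.
* For `x ≥ -1`, `t² + x ≥ 3` beyond `t = 2`, hence `|F x b| ≤ 3`.
* For `x ≤ -1`, take `δ = |x|^{1/4}`. Van der Corput applies outside the window
  `t² ∈ [|x| - δ, |x| + δ]` around the stationary point, and the window has length at most `2 / δ`;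
  hence `|F x b| ≤ 8 |x|^{-1/4}`.
* For `x ≥ 1`, Cauchy's theorem moves the contour to `Im z = √x`, where `|exp (i (z³/3 + x z))|` is
  `exp (-2/3 x^{3/2})` times a Gaussian in `Re z`.

So `Ai u ^ 2 ≤ 8 |u|^{-1/2}` for `u < 0` and `Ai u ^ 2 ≤ exp (4/3 - 4/3 u^{3/2})` for `u ≥ 0`.
Against `e^{βu}` the first bound integrates over `u < 0` to `8 Γ(1/2) β^{-1/2}`; the second is
integrable for every `β` and, for `β ≤ 1`, dominated by its value at `β = 1`.
-/

open Set Real Topology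

section VanDerCorput

variable {φ φ' φ'' : ℝ → ℝ} {a b δ : ℝ}

theorem integral_deriv_div_sq_le_of_nonstationary (hab : a ≤ b) (hδ : 0 < δ)
    (hφ' : ∀ t ∈ Icc a b, HasDerivAt φ' (φ'' t) t) (hφ''c : ContinuousOn φ'' (Icc a b))
    (hsep : (∀ t ∈ Icc a b, δ ≤ φ' t) ∨ ∀ t ∈ Icc a b, φ' t ≤ -δ) :
    ∫ t in a..b, φ'' t / φ' t ^ 2 ≤ 1 / δ := by
  have hne : ∀ t ∈ Icc a b, φ' t ≠ 0 := by
    rcases hsep with h | h <;> intro t ht <;> linarith [h t ht]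
  have hFTC : ∫ t in a..b, φ'' t / φ' t ^ 2 = (φ' a)⁻¹ - (φ' b)⁻¹ := by
    rw [intervalIntegral.integral_eq_sub_of_hasDerivAt (f := fun t => -(φ' t)⁻¹)]
    · ring
    · intro t ht
      rw [uIcc_of_le hab] at ht
      exact ((hφ' t ht).inv (hne t ht)).neg.congr_deriv (by ring)
    · refine ContinuousOn.intervalIntegrable ?_
      rw [uIcc_of_le hab]
      exact hφ''c.div (fun t ht => (hφ' t ht).continuousAt.continuousWithinAt.pow 2)
        fun t ht => pow_ne_zero 2 (hne t ht)
  have ha : a ∈ Icc a b := left_mem_Icc.mpr hab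
  have hb : b ∈ Icc a b := right_mem_Icc.mpr hab
  rw [hFTC]
  rcases hsep with h | h
  · have : 0 < (φ' b)⁻¹ := inv_pos.mpr (hδ.trans_le (h b hb))
    have : (φ' a)⁻¹ ≤ 1 / δ := by rw [inv_eq_one_div]; gcongr; exact h a ha
    linarith
  · have : (φ' a)⁻¹ < 0 := inv_lt_zero.mpr (by linarith [h a ha])
    have : -(φ' b)⁻¹ ≤ 1 / δ := by
      rw [← inv_neg, inv_eq_one_div]; gcongr; linarith [h b hb]
    linarith

theorem abs_integral_cos_le_of_nonstationary (hab : a ≤ b) (hδ : 0 < δ)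
    (hφ : ∀ t ∈ Icc a b, HasDerivAt φ (φ' t) t) (hφ' : ∀ t ∈ Icc a b, HasDerivAt φ' (φ'' t) t)
    (hφ''c : ContinuousOn φ'' (Icc a b)) (hφ''0 : ∀ t ∈ Icc a b, 0 ≤ φ'' t)
    (hsep : (∀ t ∈ Icc a b, δ ≤ φ' t) ∨ ∀ t ∈ Icc a b, φ' t ≤ -δ) :
    |∫ t in a..b, cos (φ t)| ≤ 3 / δ := by
  have hδφ' : ∀ t ∈ Icc a b, δ ≤ |φ' t| := by
    rcases hsep with h | h <;> intro t ht <;>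
      linarith [h t ht, le_abs_self (φ' t), neg_abs_le (φ' t)]
  have hne : ∀ t ∈ Icc a b, φ' t ≠ 0 := fun t ht h0 => by
    have := hδφ' t ht; rw [h0, abs_zero] at this; linarith
  have hboundary : ∀ t ∈ Icc a b, |(φ' t)⁻¹ * sin (φ t)| ≤ 1 / δ := fun t ht => by
    rw [abs_mul, abs_inv, ← one_div]
    calc 1 / |φ' t| * |sin (φ t)| ≤ 1 / |φ' t| * 1 := by gcongr; exact abs_sin_le_one _
      _ ≤ 1 / δ := by rw [mul_one]; gcongr; exact hδφ' t ht
  have hweight := integral_deriv_div_sq_le_of_nonstationary hab hδ hφ' hφ''c hsep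
  rw [← uIcc_of_le hab] at hφ hφ' hφ''c hne
  have hφ'c : ContinuousOn φ' (uIcc a b) := fun t ht => (hφ' t ht).continuousAt.continuousWithinAt
  have hφc : ContinuousOn φ (uIcc a b) := fun t ht => (hφ t ht).continuousAt.continuousWithinAt
  have hIBP := intervalIntegral.integral_mul_deriv_eq_deriv_mul
    (u := fun t => (φ' t)⁻¹) (v := fun t => sin (φ t))
    (fun t ht => (hφ' t ht).inv (hne t ht)) (fun t ht => (hφ t ht).sin)
    ((hφ''c.neg.div (hφ'c.pow 2) fun t ht => pow_ne_zero 2 (hne t ht)).intervalIntegrable)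
    (((continuous_cos.comp_continuousOn hφc).mul hφ'c).intervalIntegrable)
  have hcos : ∫ t in a..b, (φ' t)⁻¹ * (cos (φ t) * φ' t) = ∫ t in a..b, cos (φ t) :=
    intervalIntegral.integral_congr fun t ht => by field_simp [hne t ht]
  have hrem : |∫ t in a..b, -φ'' t / φ' t ^ 2 * sin (φ t)| ≤ 1 / δ := by
    rw [← Real.norm_eq_abs]
    refine (intervalIntegral.norm_integral_le_of_norm_le hab ?_ ?_).trans hweight
    · refine ae_of_all _ fun t ht => ?_
      have ht' : t ∈ Icc a b := Ioc_subset_Icc_self ht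
      rw [norm_mul, norm_div, norm_neg, norm_pow, Real.norm_of_nonneg (hφ''0 t ht'),
        Real.norm_eq_abs, sq_abs]
      exact mul_le_of_le_one_right (div_nonneg (hφ''0 t ht') (sq_nonneg _)) (abs_sin_le_one _)
    · exact (hφ''c.div (hφ'c.pow 2) fun t ht => pow_ne_zero 2 (hne t ht)).intervalIntegrable
  rw [← hcos, hIBP]
  calc _ ≤ |(φ' b)⁻¹ * sin (φ b) - (φ' a)⁻¹ * sin (φ a)|
        + |∫ t in a..b, -φ'' t / φ' t ^ 2 * sin (φ t)| := abs_sub _ _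
    _ ≤ |(φ' b)⁻¹ * sin (φ b)| + |(φ' a)⁻¹ * sin (φ a)|
        + |∫ t in a..b, -φ'' t / φ' t ^ 2 * sin (φ t)| := by gcongr; exact abs_sub _ _
    _ ≤ 1 / δ + 1 / δ + 1 / δ := by
      gcongr
      exacts [hboundary b (right_mem_Icc.mpr hab), hboundary a (left_mem_Icc.mpr hab)]
    _ = 3 / δ := by ring

end VanDerCorput

theorem abs_integral_cos_le (f : ℝ → ℝ) {a b : ℝ} (hab : a ≤ b) :
    |∫ t in a..b, cos (f t)| ≤ b - a := by
  have := intervalIntegral.norm_integral_le_of_norm_le_const (a := a) (b := b) (C := 1)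
    (f := fun t => cos (f t)) fun t _ => abs_cos_le_one _
  rwa [one_mul, abs_of_nonneg (sub_nonneg.mpr hab)] at this

noncomputable def airyPhase (x t : ℝ) : ℝ := t ^ 3 / 3 + x * t

theorem hasDerivAt_airyPhase (x t : ℝ) : HasDerivAt (airyPhase x) (t ^ 2 + x) t :=
  (((hasDerivAt_pow 3 t).div_const 3).add ((hasDerivAt_id t).const_mul x)).congr_deriv
    (by push_cast; ring)

theorem airyPhase_neg (x t : ℝ) : airyPhase x (-t) = -airyPhase x t := by
  simp only [airyPhase]; ring

theorem continuous_airyPhase (x : ℝ) : Continuous (airyPhase x) := by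
  unfold airyPhase; fun_prop

theorem intervalIntegrable_cos_airyPhase (x a b : ℝ) :
    IntervalIntegrable (fun t => cos (airyPhase x t)) volume a b :=
  (continuous_cos.comp (continuous_airyPhase x)).intervalIntegrable a b

theorem abs_integral_cos_airyPhase_le_of_nonstationary {x a b δ : ℝ} (ha : 0 ≤ a) (hab : a ≤ b)
    (hδ : 0 < δ) (hsep : (∀ t ∈ Icc a b, δ ≤ t ^ 2 + x) ∨ ∀ t ∈ Icc a b, t ^ 2 + x ≤ -δ) :
    |∫ t in a..b, cos (airyPhase x t)| ≤ 3 / δ :=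
  abs_integral_cos_le_of_nonstationary (φ'' := fun t => 2 * t) hab hδ
    (fun t _ => hasDerivAt_airyPhase x t)
    (fun t _ => ((hasDerivAt_pow 2 t).add_const x).congr_deriv (by ring))
    (by fun_prop) (fun t ht => by linarith [ht.1]) hsep

theorem abs_integral_cos_airyPhase_le_three {x b : ℝ} (hx : -1 ≤ x) (hb : 0 ≤ b) :
    |∫ t in (0 : ℝ)..b, cos (airyPhase x t)| ≤ 3 := by
  rcases le_or_gt b 2 with hb2 | hb2
  · linarith [abs_integral_cos_le (airyPhase x) hb]
  rw [← intervalIntegral.integral_add_adjacent_intervals (intervalIntegrable_cos_airyPhase x 0 2)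
    (intervalIntegrable_cos_airyPhase x 2 b)]
  have hhead := abs_integral_cos_le (airyPhase x) zero_le_two
  have htail := abs_integral_cos_airyPhase_le_of_nonstationary (x := x) zero_le_two hb2.le three_pos
    (Or.inl fun t ht => by nlinarith [ht.1])
  linarith [abs_add_le (∫ t in (0 : ℝ)..2, cos (airyPhase x t))
    (∫ t in (2 : ℝ)..b, cos (airyPhase x t))]

theorem abs_integral_cos_airyPhase_le_of_window {x t₁ t₂ δ b : ℝ} (ht₁ : 0 ≤ t₁) (ht₁₂ : t₁ ≤ t₂)
    (hδ : 0 < δ) (hleft : ∀ t ∈ Icc 0 t₁, t ^ 2 + x ≤ -δ) (hright : ∀ t, t₂ ≤ t → δ ≤ t ^ 2 + x)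
    (hb : 0 ≤ b) :
    |∫ t in (0 : ℝ)..b, cos (airyPhase x t)| ≤ 6 / δ + (t₂ - t₁) := by
  set c₁ := min b t₁
  set c₂ := min b t₂
  have hc₁ : 0 ≤ c₁ := le_min hb ht₁
  have hc₁₂ : c₁ ≤ c₂ := min_le_min_left b ht₁₂
  have hhead : |∫ t in (0 : ℝ)..c₁, cos (airyPhase x t)| ≤ 3 / δ :=
    abs_integral_cos_airyPhase_le_of_nonstationary le_rfl hc₁ hδ
      (Or.inr fun t ht => hleft t ⟨ht.1, ht.2.trans (min_le_right _ _)⟩)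
  have hmid : |∫ t in c₁..c₂, cos (airyPhase x t)| ≤ t₂ - t₁ := by
    refine (abs_integral_cos_le _ hc₁₂).trans ?_
    rcases le_total b t₁ with h | h <;> rcases le_total b t₂ with h' | h' <;>
      simp only [c₁, c₂, min_eq_left, min_eq_right, h, h'] <;> linarith
  have htail : |∫ t in c₂..b, cos (airyPhase x t)| ≤ 3 / δ := by
    rcases le_total b t₂ with h | h
    · rw [show c₂ = b from min_eq_left h, intervalIntegral.integral_same, abs_zero]
      positivity
    · rw [show c₂ = t₂ from min_eq_right h]
      exact abs_integral_cos_airyPhase_le_of_nonstationary (ht₁.trans ht₁₂) h hδ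
        (Or.inl fun t ht => hright t ht.1)
  rw [← intervalIntegral.integral_add_adjacent_intervals (intervalIntegrable_cos_airyPhase x 0 c₂)
    (intervalIntegrable_cos_airyPhase x c₂ b),
    ← intervalIntegral.integral_add_adjacent_intervals (intervalIntegrable_cos_airyPhase x 0 c₁)
    (intervalIntegrable_cos_airyPhase x c₁ c₂)]
  calc _ ≤ _ := abs_add_three _ _ _
    _ ≤ 3 / δ + (t₂ - t₁) + 3 / δ := by gcongr
    _ = 6 / δ + (t₂ - t₁) := by ring

theorem abs_integral_cos_airyPhase_le_of_le_neg_one {x b : ℝ} (hx : x ≤ -1) (hb : 0 ≤ b) :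
    |∫ t in (0 : ℝ)..b, cos (airyPhase x t)| ≤ 8 / √(√(-x)) := by
  set δ := √(√(-x))
  have hsx : 1 ≤ √(-x) := one_le_sqrt.mpr (by linarith)
  have hδ1 : 1 ≤ δ := one_le_sqrt.mpr hsx
  have hδsq : δ ^ 2 = √(-x) := sq_sqrt (by positivity)
  have hsxsq : √(-x) ^ 2 = -x := sq_sqrt (by linarith)
  have hδx : δ ≤ -x := by nlinarith
  set t₁ := √(-x - δ)
  set t₂ := √(-x + δ)
  have ht₁sq : t₁ ^ 2 = -x - δ := sq_sqrt (by linarith)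
  have ht₂sq : t₂ ^ 2 = -x + δ := sq_sqrt (by linarith)
  have ht₁₂ : t₁ ≤ t₂ := sqrt_le_sqrt (by linarith)
  have hwidth : t₂ - t₁ ≤ 2 / δ := by
    have hδt₂ : δ ^ 2 ≤ t₂ := hδsq ▸ sqrt_le_sqrt (by linarith)
    rw [le_div_iff₀ (by positivity)]
    nlinarith [sqrt_nonneg (-x - δ), mul_nonneg (sub_nonneg.mpr ht₁₂) (sub_nonneg.mpr hδt₂)]
  have hwindow := abs_integral_cos_airyPhase_le_of_window (x := x) (sqrt_nonneg _) ht₁₂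
    (by positivity : 0 < δ)
    (fun t ht => by nlinarith [pow_le_pow_left₀ ht.1 ht.2 2])
    (fun t ht => by nlinarith [pow_le_pow_left₀ (sqrt_nonneg _) ht 2]) hb
  calc _ ≤ 6 / δ + (t₂ - t₁) := hwindow
    _ ≤ 6 / δ + 2 / δ := by gcongr
    _ = 8 / δ := by ring

theorem integral_neg_self_eq_two_mul_of_even {f : ℝ → ℝ} (hf : Continuous f)
    (heven : ∀ t, f (-t) = f t) (R : ℝ) :
    ∫ t in -R..R, f t = 2 * ∫ t in (0 : ℝ)..R, f t := by
  have hleft : ∫ t in -R..0, f t = ∫ t in (0 : ℝ)..R, f t := by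
    simpa [heven] using (intervalIntegral.integral_comp_neg (a := 0) (b := R) f).symm
  rw [← intervalIntegral.integral_add_adjacent_intervals (hf.intervalIntegrable (-R) 0)
    (hf.intervalIntegrable 0 R), hleft, two_mul]

section ContourShift

open Complex

variable {E : Type*} [NormedAddCommGroup E] [NormedSpace ℂ E]

theorem tendsto_intervalIntegral_of_horizontal_shift {f : ℂ → E} (hf : Differentiable ℂ f) {c : ℝ}
    (hside : Tendsto (fun s : ℝ => ∫ y in (0 : ℝ)..c, f (s + y * I)) (cocompact ℝ) (𝓝 0))
    (hint : Integrable fun t : ℝ => f (t + c * I)) :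
    Tendsto (fun R : ℝ => ∫ t in -R..R, f t) atTop (𝓝 (∫ t : ℝ, f (t + c * I))) := by
  have hrect : ∀ R : ℝ, ∫ t in -R..R, f t = (∫ t in -R..R, f (t + c * I))
      + I • (∫ y in (0 : ℝ)..c, f ((-R : ℝ) + y * I)) - I • ∫ y in (0 : ℝ)..c, f (R + y * I) := by
    intro R
    have H := integral_boundary_rect_eq_zero_of_differentiableOn f (-R : ℝ) (R + c * I)
      hf.differentiableOn
    simp only [add_re, add_im, ofReal_re, ofReal_im, mul_re, mul_im, I_re, I_im, mul_zero,
      mul_one, zero_mul, sub_zero, add_zero, zero_add, ofReal_zero] at H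
    rw [← sub_eq_zero, ← H]
    abel
  have htop := intervalIntegral_tendsto_integral hint tendsto_neg_atTop_atBot tendsto_id
  have hright := hside.comp (tendsto_id'.mpr atTop_le_cocompact)
  have hleft := hside.comp (tendsto_neg_atTop_atBot.mono_right atBot_le_cocompact)
  simpa [hrect] using (htop.add (hleft.const_smul I)).sub (hright.const_smul I)

end ContourShift

section AiryContour

open Complex (I)

noncomputable def airyExp (x : ℝ) (z : ℂ) : ℂ := Complex.exp ((z ^ 3 / 3 + x * z) * I)

theorem differentiable_airyExp (x : ℝ) : Differentiable ℂ (airyExp x) := by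
  unfold airyExp; fun_prop

theorem norm_airyExp (x t y : ℝ) :
    ‖airyExp x (t + y * I)‖ = rexp (y ^ 3 / 3 - t ^ 2 * y - x * y) := by
  rw [airyExp, Complex.norm_exp]
  congr 1
  simp [pow_succ, Complex.mul_re, Complex.mul_im]
  ring

theorem re_airyExp_ofReal (x t : ℝ) : (airyExp x t).re = cos (airyPhase x t) := by
  rw [airyExp, show (t : ℂ) ^ 3 / 3 + x * t = (airyPhase x t : ℂ) by push_cast [airyPhase]; ring]
  exact Complex.exp_ofReal_mul_I_re _

theorem tendsto_integral_airyExp_vertical (x : ℝ) {c : ℝ} (hc : 0 ≤ c) :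
    Tendsto (fun s : ℝ => ∫ y in (0 : ℝ)..c, airyExp x (s + y * I)) (cocompact ℝ) (𝓝 0) := by
  have hcont (s : ℝ) : Continuous fun y : ℝ => airyExp x (s + y * I) :=
    (differentiable_airyExp x).continuous.comp (by fun_prop)
  have hbound : ∀ s : ℝ, ∀ y ∈ uIoc 0 c, ‖airyExp x (s + y * I)‖ ≤ rexp (c ^ 3 / 3 + |x| * c) := by
    intro s y hy
    rw [uIoc_of_le hc] at hy
    rw [norm_airyExp]
    gcongr
    nlinarith [pow_le_pow_left₀ hy.1.le hy.2 3, mul_nonneg hy.1.le (sq_nonneg s),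
      mul_le_mul_of_nonneg_left hy.2 (abs_nonneg x),
      mul_nonneg (neg_le_iff_add_nonneg.mp (neg_abs_le x)) hy.1.le]
  have hlim : ∀ y ∈ uIoc 0 c, Tendsto (fun s : ℝ => airyExp x (s + y * I)) (cocompact ℝ) (𝓝 0) := by
    intro y hy
    rw [uIoc_of_le hc] at hy
    have hsq : Tendsto (fun s : ℝ => y * s ^ 2) (cocompact ℝ) atTop := by
      have := (tendsto_pow_atTop two_ne_zero).comp (tendsto_norm_cocompact_atTop (E := ℝ))
      simpa [Function.comp_def, Real.norm_eq_abs, sq_abs] using this.const_mul_atTop hy.1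
    rw [tendsto_zero_iff_norm_tendsto_zero]
    refine (tendsto_exp_atBot.comp
      (tendsto_atBot_add_const_left _ (y ^ 3 / 3 - x * y) (tendsto_neg_atTop_atBot.comp hsq))).congr
      fun s => ?_
    simp only [Function.comp_apply, norm_airyExp]
    ring_nf
  simp only [cocompact_eq_atBot_atTop] at hlim ⊢
  simpa using intervalIntegral.tendsto_integral_filter_of_dominated_convergence (f := 0) _
    (Eventually.of_forall fun s => (hcont s).aestronglyMeasurable)
    (Eventually.of_forall fun s => ae_of_all _ (hbound s)) intervalIntegrable_const
    (ae_of_all _ hlim)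

theorem re_integral_airyExp_symm (x R : ℝ) :
    (∫ t in -R..R, airyExp x t).re = 2 * ∫ t in (0 : ℝ)..R, cos (airyPhase x t) := by
  have hcont : Continuous fun t : ℝ => airyExp x t :=
    (differentiable_airyExp x).continuous.comp Complex.continuous_ofReal
  rw [← RCLike.re_to_complex,
    ← intervalIntegral.intervalIntegral_re (hcont.intervalIntegrable _ _)]
  simp_rw [RCLike.re_to_complex, re_airyExp_ofReal]
  exact integral_neg_self_eq_two_mul_of_even (f := fun t => cos (airyPhase x t))
    (continuous_cos.comp (continuous_airyPhase x)) (fun t => by rw [airyPhase_neg, cos_neg]) R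

theorem norm_airyExp_sqrt {x : ℝ} (hx : 0 ≤ x) (t : ℝ) :
    ‖airyExp x (t + √x * I)‖ = rexp (-(2 / 3) * √x ^ 3) * rexp (-√x * t ^ 2) := by
  rw [norm_airyExp, ← Real.exp_add]
  nth_rw 3 [← sq_sqrt hx]
  ring_nf

theorem abs_le_of_tendsto_integral_cos_airyPhase_of_one_le {x L : ℝ} (hx : 1 ≤ x)
    (hL : Tendsto (fun b => ∫ t in (0 : ℝ)..b, cos (airyPhase x t)) atTop (𝓝 L)) :
    |L| ≤ rexp (-(2 / 3) * √x ^ 3) * √π := by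
  have hc : 1 ≤ √x := one_le_sqrt.mpr hx
  have hnorm := norm_airyExp_sqrt (x := x) (by linarith)
  have hint : Integrable fun t : ℝ => airyExp x (t + √x * I) :=
    ((integrable_exp_neg_mul_sq (by positivity)).const_mul _).mono'
      ((differentiable_airyExp x).continuous.comp (by fun_prop)).aestronglyMeasurable
      (ae_of_all _ fun t => (hnorm t).le)
  set T := ∫ t : ℝ, airyExp x (t + √x * I)
  have hT := tendsto_intervalIntegral_of_horizontal_shift (differentiable_airyExp x)
    (tendsto_integral_airyExp_vertical x (sqrt_nonneg x)) hint
  have h2L : 2 * L = T.re :=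
    tendsto_nhds_unique ((hL.const_mul 2).congr fun R => (re_integral_airyExp_symm x R).symm)
      ((Complex.continuous_re.tendsto T).comp hT)
  have hTnorm : ‖T‖ ≤ rexp (-(2 / 3) * √x ^ 3) * √π :=
    calc ‖T‖ ≤ ∫ t : ℝ, ‖airyExp x (t + √x * I)‖ := norm_integral_le_integral_norm _
      _ = rexp (-(2 / 3) * √x ^ 3) * √(π / √x) := by
        simp_rw [hnorm]; rw [integral_const_mul, integral_gaussian]
      _ ≤ rexp (-(2 / 3) * √x ^ 3) * √π := by gcongr; exact div_le_self pi_pos.le hc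
  calc |L| ≤ |2 * L| := by rw [abs_mul, abs_two]; linarith [abs_nonneg L]
    _ = |T.re| := by rw [h2L]
    _ ≤ ‖T‖ := Complex.abs_re_le_norm T
    _ ≤ _ := hTnorm

end AiryContour

theorem exp_neg_mul_div_sqrt_eq_rpow (β : ℝ) {v : ℝ} (hv : 0 < v) :
    rexp (-(β * v)) / √v = v ^ ((1 / 2 : ℝ) - 1) * rexp (-(β * v)) := by
  rw [show (1 / 2 : ℝ) - 1 = -(1 / 2) by norm_num, rpow_neg hv.le, ← sqrt_eq_rpow, div_eq_inv_mul]

theorem integrableOn_Ioi_exp_neg_mul_div_sqrt {β : ℝ} (hβ : 0 < β) :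
    IntegrableOn (fun v => rexp (-(β * v)) / √v) (Ioi 0) := by
  refine (integrableOn_rpow_mul_exp_neg_mul_rpow (s := (1 / 2 : ℝ) - 1) (by norm_num) one_pos
    hβ).congr_fun (fun v hv => ?_) measurableSet_Ioi
  rw [exp_neg_mul_div_sqrt_eq_rpow β hv]
  dsimp only
  rw [rpow_one, neg_mul]

theorem integral_Ioi_exp_neg_mul_div_sqrt {β : ℝ} (hβ : 0 < β) :
    ∫ v in Ioi 0, rexp (-(β * v)) / √v = √π * β ^ (-(1 : ℝ) / 2) := by
  rw [setIntegral_congr_fun measurableSet_Ioi fun v hv => exp_neg_mul_div_sqrt_eq_rpow β hv,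
    integral_rpow_mul_exp_neg_mul_Ioi (by norm_num) hβ, ← Gamma_one_half_eq, one_div,
    inv_rpow hβ.le, ← rpow_neg hβ.le, mul_comm]
  norm_num

theorem integrableOn_Ioi_exp_mul_sub_mul_sqrt_pow_three (β : ℝ) {γ : ℝ} (hγ : 0 < γ) :
    IntegrableOn (fun u => rexp (β * u - γ * √u ^ 3)) (Ioi 0) := by
  refine integrable_of_isBigO_exp_neg one_pos (by fun_prop) (Asymptotics.IsBigO.of_bound 1 ?_)
  filter_upwards [eventually_ge_atTop 0,
    tendsto_sqrt_atTop.eventually_ge_atTop ((β + 1) / γ)] with u hu hsqrt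
  rw [one_mul, norm_of_nonneg (exp_pos _).le, norm_of_nonneg (exp_pos _).le, exp_le_exp]
  have hcube : √u ^ 3 = u * √u := by rw [pow_succ, sq_sqrt hu, mul_comm]
  rw [div_le_iff₀ hγ] at hsqrt
  nlinarith [mul_le_mul_of_nonneg_left hsqrt hu]

theorem sq_le_of_abs_pi_mul_le {A M : ℝ} (h : |π * A| ≤ M) : A ^ 2 ≤ M ^ 2 / 9 := by
  have h9 : 9 ≤ π ^ 2 := by nlinarith [pi_gt_three]
  rw [le_div_iff₀ (by norm_num)]
  calc A ^ 2 * 9 ≤ A ^ 2 * π ^ 2 := by gcongr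
    _ = |π * A| ^ 2 := by rw [sq_abs]; ring
    _ ≤ M ^ 2 := by gcongr

def IsAiryFunction (Ai : ℝ → ℝ) : Prop :=
  ∀ x, Tendsto (fun b => ∫ t in (0 : ℝ)..b, cos (airyPhase x t)) atTop (𝓝 (π * Ai x))

namespace IsAiryFunction

variable {Ai : ℝ → ℝ}

theorem measurable (hAi : IsAiryFunction Ai) : Measurable Ai := by
  have hcont (n : ℕ) : Continuous fun x => ∫ t in (0 : ℝ)..n, cos (airyPhase x t) :=
    intervalIntegral.continuous_parametric_intervalIntegral_of_continuous'
      (f := fun x t => cos (airyPhase x t)) (by unfold airyPhase; fun_prop) _ _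
  have hπAi : Measurable fun x => π * Ai x :=
    measurable_of_tendsto_metrizable (fun n => (hcont n).measurable)
      (tendsto_pi_nhds.mpr fun x => (hAi x).comp tendsto_natCast_atTop_atTop)
  simpa [← mul_assoc, pi_ne_zero] using hπAi.const_mul π⁻¹

theorem sq_le_one (hAi : IsAiryFunction Ai) {x : ℝ} (hx : -1 ≤ x) : Ai x ^ 2 ≤ 1 := by
  have h := le_of_tendsto (hAi x).abs ((eventually_ge_atTop 0).mono fun b hb =>
    abs_integral_cos_airyPhase_le_three hx hb)
  linarith [sq_le_of_abs_pi_mul_le h]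

theorem sq_le_of_neg (hAi : IsAiryFunction Ai) {x : ℝ} (hx : x < 0) : Ai x ^ 2 ≤ 8 / √(-x) := by
  have hsx : 0 < √(-x) := sqrt_pos.mpr (by linarith)
  rcases le_or_gt x (-1) with hx1 | hx1
  · have h := le_of_tendsto (hAi x).abs ((eventually_ge_atTop 0).mono fun b hb =>
      abs_integral_cos_airyPhase_le_of_le_neg_one hx1 hb)
    refine (sq_le_of_abs_pi_mul_le h).trans ?_
    rw [div_pow, sq_sqrt (sqrt_nonneg _), div_div, div_le_div_iff₀ (by positivity) hsx]
    nlinarith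
  · have : √(-x) ≤ 1 := sqrt_le_one.mpr (by linarith)
    calc Ai x ^ 2 ≤ 1 := hAi.sq_le_one hx1.le
      _ ≤ 8 / √(-x) := by rw [le_div_iff₀ hsx]; linarith

theorem sq_le_of_nonneg (hAi : IsAiryFunction Ai) {x : ℝ} (hx : 0 ≤ x) :
    Ai x ^ 2 ≤ rexp (4 / 3) * rexp (-(4 / 3 * √x ^ 3)) := by
  rw [← Real.exp_add]
  rcases le_or_gt x 1 with hx1 | hx1
  · have : √x ^ 3 ≤ 1 := pow_le_one₀ (sqrt_nonneg x) (sqrt_le_one.mpr hx1)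
    calc Ai x ^ 2 ≤ 1 := hAi.sq_le_one (by linarith)
      _ ≤ _ := one_le_exp (by linarith)
  · have h := sq_le_of_abs_pi_mul_le
      (abs_le_of_tendsto_integral_cos_airyPhase_of_one_le hx1.le (hAi x))
    calc Ai x ^ 2 ≤ (rexp (-(2 / 3) * √x ^ 3) * √π) ^ 2 / 9 := h
      _ = rexp (-(2 / 3) * √x ^ 3 + -(2 / 3) * √x ^ 3) * (π / 9) := by
        rw [Real.exp_add, mul_pow, sq_sqrt pi_pos.le]; ring
      _ ≤ rexp (4 / 3 + -(4 / 3 * √x ^ 3)) * 1 :=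
        mul_le_mul (exp_le_exp.mpr (by linarith)) (by linarith [pi_lt_four]) (by positivity)
          (exp_pos _).le
      _ = _ := mul_one _

theorem exp_mul_sq_le_of_nonneg (hAi : IsAiryFunction Ai) (β : ℝ) {u : ℝ} (hu : 0 ≤ u) :
    rexp (β * u) * Ai u ^ 2 ≤ rexp (4 / 3) * rexp (β * u - 4 / 3 * √u ^ 3) := by
  calc rexp (β * u) * Ai u ^ 2 ≤ rexp (β * u) * (rexp (4 / 3) * rexp (-(4 / 3 * √u ^ 3))) := by
        gcongr; exact hAi.sq_le_of_nonneg hu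
    _ = _ := by rw [sub_eq_add_neg, Real.exp_add]; ring

theorem exp_mul_sq_neg_le (hAi : IsAiryFunction Ai) (β : ℝ) {v : ℝ} (hv : 0 < v) :
    rexp (β * -v) * Ai (-v) ^ 2 ≤ 8 * (rexp (-(β * v)) / √v) := by
  calc rexp (β * -v) * Ai (-v) ^ 2 ≤ rexp (β * -v) * (8 / √(- -v)) := by
        gcongr; exact hAi.sq_le_of_neg (neg_neg_of_pos hv)
    _ = _ := by rw [neg_neg, mul_neg]; ring

theorem integrableOn_Ioi_exp_mul_sq (hAi : IsAiryFunction Ai) (β : ℝ) :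
    IntegrableOn (fun u => rexp (β * u) * Ai u ^ 2) (Ioi 0) := by
  have hm := hAi.measurable
  refine ((integrableOn_Ioi_exp_mul_sub_mul_sqrt_pow_three β (by norm_num : (0 : ℝ) < 4 / 3)
    ).const_mul (rexp (4 / 3))).mono'
    (by fun_prop : Measurable fun u => rexp (β * u) * Ai u ^ 2).aestronglyMeasurable
    (ae_restrict_of_forall_mem measurableSet_Ioi fun u hu => ?_)
  rw [norm_of_nonneg (by positivity)]
  exact hAi.exp_mul_sq_le_of_nonneg β (le_of_lt hu)

theorem setIntegral_Ioi_exp_mul_sq_le (hAi : IsAiryFunction Ai) {β : ℝ} (hβ : β ≤ 1) :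
    ∫ u in Ioi 0, rexp (β * u) * Ai u ^ 2
      ≤ rexp (4 / 3) * ∫ u in Ioi 0, rexp (u - 4 / 3 * √u ^ 3) := by
  have hmajorant : IntegrableOn (fun u => rexp (u - 4 / 3 * √u ^ 3)) (Ioi 0) := by
    simpa using integrableOn_Ioi_exp_mul_sub_mul_sqrt_pow_three 1 (by norm_num : (0 : ℝ) < 4 / 3)
  rw [← integral_const_mul]
  refine setIntegral_mono_on (hAi.integrableOn_Ioi_exp_mul_sq β) (hmajorant.const_mul _)
    measurableSet_Ioi fun u hu => (hAi.exp_mul_sq_le_of_nonneg β (le_of_lt hu)).trans ?_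
  gcongr
  nlinarith [mem_Ioi.mp hu]

theorem integrableOn_Ioi_exp_mul_sq_neg (hAi : IsAiryFunction Ai) {β : ℝ} (hβ : 0 < β) :
    IntegrableOn (fun v => rexp (β * -v) * Ai (-v) ^ 2) (Ioi 0) := by
  have hm := hAi.measurable
  refine ((integrableOn_Ioi_exp_neg_mul_div_sqrt hβ).const_mul 8).mono'
    (by fun_prop : Measurable fun v => rexp (β * -v) * Ai (-v) ^ 2).aestronglyMeasurable
    (ae_restrict_of_forall_mem measurableSet_Ioi fun v hv => ?_)
  rw [norm_of_nonneg (by positivity)]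
  exact hAi.exp_mul_sq_neg_le β hv

theorem integrableOn_Iic_exp_mul_sq (hAi : IsAiryFunction Ai) {β : ℝ} (hβ : 0 < β) :
    IntegrableOn (fun u => rexp (β * u) * Ai u ^ 2) (Iic 0) := by
  have h := hAi.integrableOn_Ioi_exp_mul_sq_neg hβ
  rw [← neg_zero] at h
  rw [integrableOn_Iic_iff_integrableOn_Iio]
  simpa only [neg_neg] using h.comp_neg_Iio

theorem setIntegral_Iic_exp_mul_sq_le (hAi : IsAiryFunction Ai) {β : ℝ} (hβ : 0 < β) :
    ∫ u in Iic 0, rexp (β * u) * Ai u ^ 2 ≤ 8 * √π * β ^ (-(1 : ℝ) / 2) :=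
  calc ∫ u in Iic 0, rexp (β * u) * Ai u ^ 2 = ∫ v in Ioi 0, rexp (β * -v) * Ai (-v) ^ 2 := by
        simpa only [neg_zero] using
          (integral_comp_neg_Ioi 0 fun u => rexp (β * u) * Ai u ^ 2).symm
    _ ≤ ∫ v in Ioi 0, 8 * (rexp (-(β * v)) / √v) :=
        setIntegral_mono_on (hAi.integrableOn_Ioi_exp_mul_sq_neg hβ)
          ((integrableOn_Ioi_exp_neg_mul_div_sqrt hβ).const_mul 8) measurableSet_Ioi
          fun v hv => hAi.exp_mul_sq_neg_le β hv
    _ = 8 * √π * β ^ (-(1 : ℝ) / 2) := by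
        rw [integral_const_mul, integral_Ioi_exp_neg_mul_div_sqrt hβ, mul_assoc]

end IsAiryFunction

/-- The integral `∫_ℝ e^{βu} Ai(u)² du` is finite for every `β > 0`, and there is a
constant `C > 0` such that for every `β ∈ (0, 1]`, `∫_ℝ e^{βu} Ai(u)² du ≤ C · β^{−1/2}`. -/
theorem airy_exp_square_integral_bound
    (Ai : ℝ → ℝ)
    (hAi : ∀ x : ℝ, Tendsto (fun b : ℝ => ∫ t in (0:ℝ)..b, Real.cos (t ^ 3 / 3 + x * t))
      atTop (nhds (Real.pi * Ai x)))
    :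
    (∀ β : ℝ, 0 < β → Integrable (fun u : ℝ => Real.exp (β * u) * (Ai u) ^ 2)) ∧
    ∃ C : ℝ, 0 < C ∧ ∀ β : ℝ, 0 < β → β ≤ 1 →
      (∫ u : ℝ, Real.exp (β * u) * (Ai u) ^ 2) ≤ C * β ^ (-(1:ℝ) / 2) := by
  have hAiry : IsAiryFunction Ai := hAi
  refine ⟨fun β hβ => ?_, ?_⟩
  · rw [← integrableOn_univ, ← Iic_union_Ioi (a := 0)]
    exact (hAiry.integrableOn_Iic_exp_mul_sq hβ).union (hAiry.integrableOn_Ioi_exp_mul_sq β)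
  set C₀ := rexp (4 / 3) * ∫ u in Ioi 0, rexp (u - 4 / 3 * √u ^ 3)
  have hC₀ : 0 ≤ C₀ :=
    mul_nonneg (exp_pos _).le (setIntegral_nonneg measurableSet_Ioi fun _ _ => (exp_pos _).le)
  refine ⟨8 * √π + C₀, by positivity, fun β hβ hβ1 => ?_⟩
  have hβpow : 1 ≤ β ^ (-(1 : ℝ) / 2) :=
    one_le_rpow_of_pos_of_le_one_of_nonpos hβ hβ1 (by norm_num)
  rw [← intervalIntegral.integral_Iic_add_Ioi (hAiry.integrableOn_Iic_exp_mul_sq hβ)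
    (hAiry.integrableOn_Ioi_exp_mul_sq β)]
  have hneg := hAiry.setIntegral_Iic_exp_mul_sq_le hβ
  have hpos := hAiry.setIntegral_Ioi_exp_mul_sq_le hβ1
  nlinarith
end

section
/- Let X(t), t ∈ I, be a real-valued stochastic process on a probability space, where I ⊆ ℝ is an interval. Assume: (1) there is a countable dense subset J of I such that lim_{K→∞} P(|X(t)| ≤ K for all t ∈ J) = 1; and (2) there are α, β > 0 such that for each M > 0 there exist ε > 0 and c > 0 with E(|X^M(t) − X^M(s)|^α) ≤ c|t−s|^{1+β} for all s, t ∈ I with |t−s| < ε. Then for every γ ∈ (0, β/α) the process X has a version (a process Y with Y(t) = X(t) almost surely for each t ∈ I) all of whose paths are locally Hölder continuous on I with exponent γ. -/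
/-!
Truncating at a level `M` yields a bounded process, which satisfies Kolmogorov's moment condition
on all of `I` (for `|t - s| ≥ ε` the trivial bound `(2M)^α` suffices). Weighting the `α`-th
moments of the increments of `X^M` between neighbouring dyadic points of level `n` in a bounded
window by `2^{γαn}` gives a series with finite expectation, because
`∑ₙ 2ⁿ · 2^{γαn} · 2^{-(1+β)n} < ∞` when `γα < β`. So almost surely these increments are
`O(2^{-γn})`, and chaining turns this into a Hölder bound on the dyadic points of the window; the
limit of `X^M` along dyadic points is then locally `γ`-Hölder on `I`. By (1), almost surely `X` is
bounded on `J` by some `k`. At the level `M = k + 1` the dyadic limit at `t` is `X^M(t)` almost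
surely (moments along a fast sequence are summable), and `|X^M(t)| ≤ k` because `t` is a limit of
points of `J`; hence it is `X(t)`.
-/

open MeasureTheory Filter Set Topology
open scoped ENNReal NNReal

noncomputable def truncate (M x : ℝ) : ℝ := max (-M) (min M x)

section Truncate

variable {M x : ℝ}

@[fun_prop]
lemma continuous_truncate (M : ℝ) : Continuous (truncate M) :=
  continuous_const.max (continuous_const.min continuous_id)

lemma abs_truncate_le (hM : 0 ≤ M) (x : ℝ) : |truncate M x| ≤ M :=
  abs_le.2 ⟨le_max_left _ _, max_le (by linarith) (min_le_left _ _)⟩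

lemma abs_truncate_le_abs (hM : 0 ≤ M) (x : ℝ) : |truncate M x| ≤ |x| :=
  abs_le.2 ⟨le_max_of_le_right (le_min (by linarith [abs_nonneg x]) (neg_abs_le x)),
    max_le (by linarith [abs_nonneg x]) ((min_le_right _ _).trans (le_abs_self x))⟩

lemma truncate_eq_self_of_abs_truncate_lt (h : |truncate M x| < M) : truncate M x = x := by
  unfold truncate at *
  rw [abs_lt] at h
  rcases le_total x M with h1 | h1 <;> rcases le_total (-M) x with h2 | h2 <;>
    simp_all

end Truncate

lemma holderOnWith_of_dist_le {X Y : Type*} [PseudoMetricSpace X] [PseudoMetricSpace Y]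
    {f : X → Y} {s : Set X} {C : ℝ} {r : ℝ≥0} (hC : 0 ≤ C)
    (h : ∀ x ∈ s, ∀ y ∈ s, dist (f x) (f y) ≤ C * dist x y ^ (r : ℝ)) :
    HolderOnWith C.toNNReal r f s := fun x hx y hy => by
  rw [edist_dist, edist_dist, ENNReal.ofReal_rpow_of_nonneg dist_nonneg r.coe_nonneg,
    ENNReal.ofNNReal_toNNReal, ← ENNReal.ofReal_mul hC]
  exact ENNReal.ofReal_le_ofReal (h x hx y hy)

section Extension

variable {X Y : Type*} [PseudoEMetricSpace X] [PseudoEMetricSpace Y] [CompleteSpace Y] [Nonempty Y]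
  {D V : Set X} {g : X → Y} {C r : ℝ≥0}

lemma HolderOnWith.tendsto_limUnder_nhdsWithin (hg : HolderOnWith C r g (D ∩ V)) (hr : 0 < r)
    {x : X} (hV : V ∈ 𝓝 x) (hx : x ∈ closure D) :
    Tendsto g (𝓝[D] x) (𝓝 (limUnder (𝓝[D] x) g)) := by
  have hDV : 𝓝[D ∩ V] x = 𝓝[D] x := nhdsWithin_inter_of_mem' (mem_nhdsWithin_of_mem_nhds hV)
  have : (𝓝[D] x).NeBot := mem_closure_iff_nhdsWithin_neBot.1 hx
  have : Cauchy (map g (𝓝[D] x)) :=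
    (cauchy_nhds.mono nhdsWithin_le_nhds).map_of_le (hg.uniformContinuousOn hr)
      (hDV ▸ inf_le_right)
  exact tendsto_nhds_limUnder (cauchy_map_iff_exists_tendsto.1 this)

lemma HolderOnWith.limUnder_nhdsWithin (hg : HolderOnWith C r g (D ∩ V)) (hr : 0 < r)
    (hV : IsOpen V) : HolderOnWith C r (fun x => limUnder (𝓝[D] x) g) (closure D ∩ V) := by
  intro x hx y hy
  have : (𝓝[D] x).NeBot := mem_closure_iff_nhdsWithin_neBot.1 hx.1
  have : (𝓝[D] y).NeBot := mem_closure_iff_nhdsWithin_neBot.1 hy.1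
  set F := 𝓝[D] x ×ˢ 𝓝[D] y
  have hfst : Tendsto Prod.fst F (𝓝[D] x) := tendsto_fst
  have hsnd : Tendsto Prod.snd F (𝓝[D] y) := tendsto_snd
  have hlim := ((hg.tendsto_limUnder_nhdsWithin hr (hV.mem_nhds hx.2) hx.1).comp hfst).edist
    ((hg.tendsto_limUnder_nhdsWithin hr (hV.mem_nhds hy.2) hy.1).comp hsnd)
  have hbound : Tendsto (fun p : X × X => (C : ℝ≥0∞) * edist p.1 p.2 ^ (r : ℝ)) F
      (𝓝 (C * edist x y ^ (r : ℝ))) :=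
    ENNReal.Tendsto.const_mul ((ENNReal.continuous_rpow_const.tendsto _).comp
      ((hfst.mono_right nhdsWithin_le_nhds).edist (hsnd.mono_right nhdsWithin_le_nhds)))
      (Or.inr ENNReal.coe_ne_top)
  refine le_of_tendsto_of_tendsto hlim hbound ?_
  have hDV : ∀ z ∈ V, D ∩ V ∈ 𝓝[D] z := fun z hz =>
    inter_mem self_mem_nhdsWithin (mem_nhdsWithin_of_mem_nhds (hV.mem_nhds hz))
  filter_upwards [prod_mem_prod (hDV x hx.2) (hDV y hy.2)] with p hp
  exact hg _ hp.1 _ hp.2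

end Extension

def LocallyHolderOn {X Y : Type*} [PseudoEMetricSpace X] [PseudoEMetricSpace Y] (r : ℝ≥0)
    (f : X → Y) (s : Set X) : Prop :=
  ∀ x ∈ s, ∃ U ∈ 𝓝[s] x, ∃ C, HolderOnWith C r f U

section LocallyHolder

variable {X Y : Type*} [PseudoEMetricSpace X] [PseudoEMetricSpace Y] {r : ℝ≥0} {f : X → Y}

lemma LocallyHolderOn.mono {s t : Set X} (hf : LocallyHolderOn r f s) (hts : t ⊆ s) :
    LocallyHolderOn r f t := fun x hx =>
  let ⟨U, hU, C, hC⟩ := hf x (hts hx)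
  ⟨U, nhdsWithin_mono x hts hU, C, hC⟩

lemma locallyHolderOn_limUnder_nhdsWithin [CompleteSpace Y] [Nonempty Y] {D : Set X} {g : X → Y}
    (hr : 0 < r) (hg : ∀ x ∈ closure D, ∃ V ∈ 𝓝 x, ∃ C, HolderOnWith C r g (D ∩ V)) :
    LocallyHolderOn r (fun x => limUnder (𝓝[D] x) g) (closure D) := fun x hx =>
  let ⟨V, hV, C, hC⟩ := hg x hx
  ⟨closure D ∩ interior V, inter_mem_nhdsWithin _ (interior_mem_nhds.2 hV), C,
    (hC.mono (inter_subset_inter_right _ interior_subset)).limUnder_nhdsWithin hr isOpen_interior⟩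

end LocallyHolder

noncomputable def dyadic (n : ℕ) (k : ℤ) : ℝ := k / 2 ^ n

def dyadics : Set ℝ := {x | ∃ n k, dyadic n k = x}

section Dyadic

lemma dyadic_mem_dyadics (n : ℕ) (k : ℤ) : dyadic n k ∈ dyadics := ⟨n, k, rfl⟩

lemma dyadic_add_one_sub (n : ℕ) (k : ℤ) : dyadic n (k + 1) - dyadic n k = (2 ^ n)⁻¹ := by
  simp only [dyadic, Int.cast_add, Int.cast_one]; ring

lemma dyadic_succ_two_mul (n : ℕ) (k : ℤ) : dyadic (n + 1) (2 * k) = dyadic n k := by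
  simp only [dyadic, Int.cast_mul, Int.cast_ofNat, pow_succ]; field_simp

lemma dyadic_eq_of_le {n m : ℕ} (h : n ≤ m) (k : ℤ) : dyadic n k = dyadic m (k * 2 ^ (m - n)) := by
  obtain ⟨d, rfl⟩ := Nat.exists_eq_add_of_le h
  simp only [dyadic, Nat.add_sub_cancel_left, Int.cast_mul, Int.cast_pow, Int.cast_ofNat, pow_add]
  field_simp

lemma dyadic_strictMono (n : ℕ) : StrictMono (dyadic n) := fun _ _ h =>
  div_lt_div_of_pos_right (Int.cast_lt.2 h) (by positivity)

lemma exists_common_level {x y : ℝ} (hx : x ∈ dyadics) (hy : y ∈ dyadics) (n : ℕ) :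
    ∃ (d : ℕ) (k l : ℤ), dyadic (n + d) k = x ∧ dyadic (n + d) l = y := by
  obtain ⟨a, k, rfl⟩ := hx
  obtain ⟨b, l, rfl⟩ := hy
  exact ⟨a + b, _, _, (dyadic_eq_of_le (by omega) k).symm, (dyadic_eq_of_le (by omega) l).symm⟩

lemma dense_dyadics : Dense dyadics := by
  refine dense_of_exists_between fun a b hab => ?_
  obtain ⟨n, hn⟩ := exists_pow_lt_of_lt_one (sub_pos.2 hab) (by norm_num : (2⁻¹ : ℝ) < 1)
  have h2n : (0 : ℝ) < 2 ^ n := by positivity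
  refine ⟨dyadic n (⌊a * 2 ^ n⌋ + 1), dyadic_mem_dyadics _ _, ?_, ?_⟩
  · rw [dyadic, lt_div_iff₀ h2n]
    push_cast
    exact Int.lt_floor_add_one _
  · rw [dyadic, div_lt_iff₀ h2n]
    rw [inv_pow, inv_lt_iff_one_lt_mul₀' h2n] at hn
    push_cast
    nlinarith [Int.floor_le (a * 2 ^ n)]

lemma Set.OrdConnected.subset_closure_inter_dyadics {I : Set ℝ} (hI : I.OrdConnected)
    (hI' : I.Nontrivial) : I ⊆ closure (I ∩ dyadics) := by
  obtain ⟨a, ha, b, hb, hab⟩ := hI'.exists_lt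
  have hint : (interior I).Nonempty :=
    ⟨(a + b) / 2, interior_maximal (Ioo_subset_Icc_self.trans (hI.out ha hb)) isOpen_Ioo
      ⟨by linarith, by linarith⟩⟩
  calc I ⊆ closure (interior I) := by
        rw [(hI.convex (𝕜 := ℝ)).closure_interior_eq_closure_of_nonempty_interior hint]
        exact subset_closure
    _ ⊆ closure (interior I ∩ dyadics) :=
        closure_minimal (dense_dyadics.open_subset_closure_inter isOpen_interior) isClosed_closure
    _ ⊆ closure (I ∩ dyadics) := closure_mono (inter_subset_inter_left _ interior_subset)

end Dyadic

lemma two_rpow_neg_pow (a : ℝ) (n : ℕ) : ((2 : ℝ) ^ (-a)) ^ n = ((2 ^ n)⁻¹ : ℝ) ^ a := by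
  rw [Real.inv_rpow (by positivity), ← Real.rpow_natCast, ← Real.rpow_natCast,
    ← Real.rpow_mul zero_le_two, ← Real.rpow_mul zero_le_two, ← Real.rpow_neg zero_le_two]
  ring_nf

lemma two_rpow_pow_rpow (a b : ℝ) (n : ℕ) : (((2 : ℝ) ^ a) ^ n) ^ b = ((2 : ℝ) ^ (a * b)) ^ n := by
  rw [← Real.rpow_natCast, ← Real.rpow_natCast, ← Real.rpow_mul (by positivity),
    ← Real.rpow_mul zero_le_two, ← Real.rpow_mul zero_le_two]
  ring_nf

lemma tsum_ofReal_mul_pow_ne_top {a ρ : ℝ} (hρ0 : 0 ≤ ρ) (hρ1 : ρ < 1) :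
    ∑' n : ℕ, ENNReal.ofReal (a * ρ ^ n) ≠ ∞ := by
  have h : ∀ n : ℕ, ENNReal.ofReal (a * ρ ^ n) = ENNReal.ofReal a * ENNReal.ofReal ρ ^ n :=
    fun n => by rw [ENNReal.ofReal_mul' (pow_nonneg hρ0 n), ENNReal.ofReal_pow hρ0]
  simp_rw [h, ENNReal.tsum_mul_left, ENNReal.tsum_geometric]
  exact ENNReal.mul_ne_top ENNReal.ofReal_ne_top
    (ENNReal.inv_ne_top.2 (tsub_pos_iff_lt.2 (ENNReal.ofReal_lt_one.2 hρ1)).ne')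

section Chaining

variable {T : Set ℝ} {f : ℝ → ℝ} {K r γ : ℝ}

lemma abs_sub_le_of_dyadic_increments_le (hT : T.OrdConnected) (hK : 0 ≤ K) (hr : 0 ≤ r)
    (hf : ∀ n k, dyadic n k ∈ T → dyadic n (k + 1) ∈ T →
      |f (dyadic n (k + 1)) - f (dyadic n k)| ≤ K * r ^ n)
    (n d : ℕ) {k l : ℤ} (hk : dyadic (n + d) k ∈ T) (hl : dyadic (n + d) l ∈ T) (hkl : k ≤ l)
    (hlk : l ≤ k + 2 ^ d) :
    |f (dyadic (n + d) l) - f (dyadic (n + d) k)| ≤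
      2 * K * ∑ j ∈ Finset.Ico n (n + d + 1), r ^ j := by
  have adjacent : ∀ m {k l : ℤ}, dyadic m k ∈ T → dyadic m l ∈ T → k ≤ l → l ≤ k + 1 →
      |f (dyadic m l) - f (dyadic m k)| ≤ K * r ^ m := by
    intro m k l hk hl hkl hlk
    rcases (show l = k ∨ l = k + 1 by omega) with rfl | rfl
    · simpa using by positivity
    · exact hf m k hk hl
  have last_le : ∀ m, K * r ^ (n + m) ≤ 2 * K * ∑ j ∈ Finset.Ico n (n + m + 1), r ^ j := by
    intro m
    rw [Finset.sum_Ico_succ_top (by omega)]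
    have : 0 ≤ ∑ j ∈ Finset.Ico n (n + m), r ^ j := Finset.sum_nonneg fun j _ => by positivity
    nlinarith [pow_nonneg hr (n + m)]
  induction d generalizing k l with
  | zero => exact (adjacent _ hk hl hkl (by simpa using hlk)).trans (last_le 0)
  | succ d ih =>
    by_cases hadj : l ≤ k + 1
    · exact (adjacent _ hk hl hkl hadj).trans (last_le _)
    -- round `k` up and `l` down to even integers, i.e. to points of level `n + d`
    set k' := (k + 1) / 2
    set l' := l / 2
    have hk' : k ≤ 2 * k' ∧ 2 * k' ≤ k + 1 := by omega
    have hl' : 2 * l' ≤ l ∧ l ≤ 2 * l' + 1 := by omega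
    have hmem : ∀ j, k ≤ j → j ≤ l → dyadic (n + (d + 1)) j ∈ T := fun j h1 h2 =>
      hT.out hk hl ⟨(dyadic_strictMono _).monotone h1, (dyadic_strictMono _).monotone h2⟩
    have hk'T := hmem (2 * k') hk'.1 (by omega)
    have hl'T := hmem (2 * l') (by omega) hl'.1
    rw [← add_assoc, dyadic_succ_two_mul] at hk'T hl'T
    have hmid := ih hk'T hl'T (by omega) (by omega)
    have h1 := adjacent _ hk (hmem (2 * k') hk'.1 (by omega)) hk'.1 hk'.2
    have h2 := adjacent _ (hmem (2 * l') (by omega) hl'.1) hl hl'.1 hl'.2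
    rw [show n + (d + 1) = n + d + 1 by ring, dyadic_succ_two_mul] at h1 h2
    rw [show n + (d + 1) = n + d + 1 by ring, Finset.sum_Ico_succ_top (by omega)]
    calc |f (dyadic (n + d + 1) l) - f (dyadic (n + d + 1) k)|
        ≤ |f (dyadic (n + d + 1) l) - f (dyadic (n + d) l')|
          + |f (dyadic (n + d) l') - f (dyadic (n + d) k')|
          + |f (dyadic (n + d) k') - f (dyadic (n + d + 1) k)| := by
          linarith [abs_sub_le (f (dyadic (n + d + 1) l)) (f (dyadic (n + d) l'))
            (f (dyadic (n + d + 1) k)), abs_sub_le (f (dyadic (n + d) l'))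
            (f (dyadic (n + d) k')) (f (dyadic (n + d + 1) k))]
      _ ≤ _ := by rw [mul_add]; linarith

lemma abs_sub_le_mul_rpow_of_dyadic_increments_le (hT : T.OrdConnected) (hK : 0 ≤ K)
    (hγ : 0 < γ)
    (hf : ∀ n k, dyadic n k ∈ T → dyadic n (k + 1) ∈ T →
      |f (dyadic n (k + 1)) - f (dyadic n k)| ≤ K * (2 ^ (-γ)) ^ n)
    {s t : ℝ} (hs : s ∈ T ∩ dyadics) (ht : t ∈ T ∩ dyadics) (hst : s < t) (h1 : t - s ≤ 1) :
    |f t - f s| ≤ 2 * K * 2 ^ γ / (1 - 2 ^ (-γ)) * (t - s) ^ γ := by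
  set r : ℝ := 2 ^ (-γ)
  have hr0 : 0 ≤ r := by positivity
  have hr1 : r < 1 := Real.rpow_lt_one_of_one_lt_of_neg one_lt_two (by linarith)
  have hts : 0 < t - s := sub_pos.2 hst
  obtain ⟨n, hn1, hn2⟩ := exists_nat_pow_near (one_le_inv₀ hts |>.2 h1) one_lt_two
  rw [le_inv_comm₀ (by positivity) hts] at hn1
  rw [inv_lt_comm₀ hts (by positivity), pow_succ, mul_inv] at hn2
  obtain ⟨d, k, l, rfl, rfl⟩ := exists_common_level hs.2 ht.2 n
  have hkl : k < l := (dyadic_strictMono _).lt_iff_lt.1 hst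
  have hlk : l ≤ k + 2 ^ d := by
    have : ((l - k : ℤ) : ℝ) ≤ 2 ^ d := by
      rw [dyadic, dyadic, ← sub_div, div_le_iff₀ (by positivity), pow_add] at hn1
      push_cast
      calc (l - k : ℝ) ≤ (2 ^ n)⁻¹ * (2 ^ n * 2 ^ d) := hn1
        _ = 2 ^ d := by field_simp
    have : l - k ≤ 2 ^ d := by exact_mod_cast this
    omega
  have hrn : r ^ n ≤ 2 ^ γ * (dyadic (n + d) l - dyadic (n + d) k) ^ γ := by
    rw [two_rpow_neg_pow, ← Real.mul_rpow zero_le_two hts.le]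
    exact Real.rpow_le_rpow (by positivity) (by linarith) hγ.le
  calc |f (dyadic (n + d) l) - f (dyadic (n + d) k)|
      ≤ 2 * K * ∑ j ∈ Finset.Ico n (n + d + 1), r ^ j :=
        abs_sub_le_of_dyadic_increments_le hT hK hr0 hf n d hs.1 ht.1 hkl.le hlk
    _ ≤ 2 * K * (r ^ n / (1 - r)) := by gcongr; exact geom_sum_Ico_le_of_lt_one hr0 hr1
    _ ≤ 2 * K * (2 ^ γ * (dyadic (n + d) l - dyadic (n + d) k) ^ γ / (1 - r)) := by
        gcongr
    _ = _ := by ring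

lemma exists_holderOnWith_of_dyadic_increments_le (hT : T.OrdConnected) (hK : 0 ≤ K)
    (hγ : 0 < γ)
    (hf : ∀ n k, dyadic n k ∈ T → dyadic n (k + 1) ∈ T →
      |f (dyadic n (k + 1)) - f (dyadic n k)| ≤ K * (2 ^ (-γ)) ^ n)
    {b : ℝ} (hb : ∀ x ∈ T ∩ dyadics, |f x| ≤ b) :
    ∃ C : ℝ≥0, HolderOnWith C γ.toNNReal f (T ∩ dyadics) := by
  have hr1 : (2 : ℝ) ^ (-γ) < 1 := Real.rpow_lt_one_of_one_lt_of_neg one_lt_two (by linarith)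
  set C₁ := 2 * K * 2 ^ γ / (1 - 2 ^ (-γ))
  have hC₁ : 0 ≤ C₁ := div_nonneg (by positivity) (by linarith)
  refine ⟨_, holderOnWith_of_dist_le (C := C₁ + 2 * |b|) (by positivity) fun x hx y hy => ?_⟩
  wlog hxy : y < x generalizing x y
  · rcases (not_lt.1 hxy).eq_or_lt with rfl | hlt
    · simp only [dist_self]; positivity
    · rw [dist_comm, dist_comm x]; exact this y hy x hx hlt
  rw [Real.dist_eq, Real.dist_eq, abs_of_pos (sub_pos.2 hxy), Real.coe_toNNReal _ hγ.le]
  rcases le_or_gt (x - y) 1 with h1 | h1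
  · calc |f x - f y| ≤ C₁ * (x - y) ^ γ :=
          abs_sub_le_mul_rpow_of_dyadic_increments_le hT hK hγ hf hy hx hxy h1
      _ ≤ (C₁ + 2 * |b|) * (x - y) ^ γ := by gcongr; linarith [abs_nonneg b]
  · calc |f x - f y| ≤ 2 * |b| := by
          linarith [abs_sub (f x) (f y), hb x hx, hb y hy, le_abs_self b]
      _ ≤ (C₁ + 2 * |b|) * 1 := by linarith
      _ ≤ (C₁ + 2 * |b|) * (x - y) ^ γ := by gcongr; exact Real.one_le_rpow h1.le hγ.le

end Chaining

open Classical in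
noncomputable def dyadicWindow (I : Set ℝ) (m n : ℕ) : Finset ℤ :=
  {k ∈ Finset.Ico (-((m * 2 ^ n : ℕ) : ℤ)) (m * 2 ^ n : ℕ) | dyadic n k ∈ I ∧ dyadic n (k + 1) ∈ I}

lemma card_dyadicWindow_le (I : Set ℝ) (m n : ℕ) :
    ((dyadicWindow I m n).card : ℝ≥0∞) ≤ ENNReal.ofReal (2 * m * 2 ^ n) := by
  classical
  have : (dyadicWindow I m n).card ≤ 2 * (m * 2 ^ n) :=
    (Finset.card_filter_le _ _).trans (by rw [Int.card_Ico]; omega)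
  rw [← ENNReal.ofReal_natCast]
  exact ENNReal.ofReal_le_ofReal (by rw [mul_assoc]; exact_mod_cast this)

lemma mem_dyadicWindow {I : Set ℝ} {m n : ℕ} {k : ℤ} (hk : dyadic n k ∈ I ∩ Icc (-m : ℝ) m)
    (hk1 : dyadic n (k + 1) ∈ I ∩ Icc (-m : ℝ) m) : k ∈ dyadicWindow I m n := by
  classical
  refine Finset.mem_filter.2 ⟨Finset.mem_Ico.2 ⟨?_, ?_⟩, hk.1, hk1.1⟩
  · have := hk.2.1
    rw [dyadic, le_div_iff₀ (by positivity)] at this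
    push_cast
    exact_mod_cast (show -(m * 2 ^ n : ℝ) ≤ k by linarith)
  · have := hk1.2.2
    rw [dyadic, div_le_iff₀ (by positivity)] at this
    push_cast at this
    exact_mod_cast (show (k : ℝ) < m * 2 ^ n by linarith)

section Moments

variable {Ω : Type*} [MeasurableSpace Ω] {P : Measure Ω} {Z : ℝ → Ω → ℝ} {I : Set ℝ} {α β : ℝ}
  {c : ℝ≥0}

lemma ae_tsum_lt_top {F : ℕ → Ω → ℝ≥0∞} (hF : ∀ n, AEMeasurable (F n) P)
    (h : ∑' n, ∫⁻ ω, F n ω ∂P ≠ ∞) : ∀ᵐ ω ∂P, ∑' n, F n ω < ∞ :=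
  ae_lt_top' (AEMeasurable.tsum hF) (by rwa [lintegral_tsum hF])

def KolmogorovMomentBound (P : Measure Ω) (Z : ℝ → Ω → ℝ) (I : Set ℝ) (α β : ℝ) (c : ℝ≥0) :
    Prop :=
  ∀ s ∈ I, ∀ t ∈ I,
    ∫⁻ ω, ENNReal.ofReal (|Z t ω - Z s ω| ^ α) ∂P ≤ ENNReal.ofReal (c * |t - s| ^ (1 + β))

namespace KolmogorovMomentBound

lemma ae_tendsto (hZ : KolmogorovMomentBound P Z I α β c) (hZm : ∀ t, Measurable (Z t))
    (hα : 0 < α) (hβ : -1 < β) {t : ℝ} (ht : t ∈ I) {u : ℕ → ℝ} (hu : ∀ n, u n ∈ I)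
    (hut : ∀ n, |u n - t| ≤ (2 ^ n)⁻¹) :
    ∀ᵐ ω ∂P, Tendsto (fun n => Z (u n) ω) atTop (𝓝 (Z t ω)) := by
  have hsum : ∀ᵐ ω ∂P, ∑' n, ENNReal.ofReal (|Z (u n) ω - Z t ω| ^ α) < ∞ := by
    refine ae_tsum_lt_top (fun n => by fun_prop) (ne_top_of_le_ne_top
      (tsum_ofReal_mul_pow_ne_top (a := c) (by positivity)
        (Real.rpow_lt_one_of_one_lt_of_neg one_lt_two (by linarith : -(1 + β) < 0)))
      (ENNReal.tsum_le_tsum fun n => (hZ t ht (u n) (hu n)).trans (ENNReal.ofReal_le_ofReal ?_)))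
    rw [two_rpow_neg_pow]
    exact mul_le_mul_of_nonneg_left (Real.rpow_le_rpow (abs_nonneg _) (hut n) (by linarith)) c.2
  filter_upwards [hsum] with ω hω
  have h0 : Tendsto (fun n => |Z (u n) ω - Z t ω| ^ α) atTop (𝓝 0) := by
    simpa [Function.comp_def, ENNReal.toReal_ofReal, Real.rpow_nonneg] using
      (ENNReal.tendsto_toReal ENNReal.zero_ne_top).comp
        (ENNReal.tendsto_atTop_zero_of_tsum_ne_top hω.ne)
  have h1 := h0.rpow_const (p := α⁻¹) (Or.inr (inv_nonneg.2 hα.le))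
  simp only [← Real.rpow_mul (abs_nonneg _), mul_inv_cancel₀ hα.ne', Real.rpow_one,
    Real.zero_rpow (inv_ne_zero hα.ne')] at h1
  exact tendsto_iff_norm_sub_tendsto_zero.2 h1

lemma lintegral_sum_dyadicWindow_le (hZ : KolmogorovMomentBound P Z I α β c)
    (hZm : ∀ t, Measurable (Z t)) (m n : ℕ) :
    ∫⁻ ω, ∑ k ∈ dyadicWindow I m n,
        ENNReal.ofReal (|Z (dyadic n (k + 1)) ω - Z (dyadic n k) ω| ^ α) ∂P ≤
      ENNReal.ofReal (2 * m * c * ((2 : ℝ) ^ (-β)) ^ n) := by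
  classical
  rw [lintegral_finsetSum' _ fun k _ => by fun_prop]
  calc ∑ k ∈ dyadicWindow I m n,
        ∫⁻ ω, ENNReal.ofReal (|Z (dyadic n (k + 1)) ω - Z (dyadic n k) ω| ^ α) ∂P
      ≤ ∑ k ∈ dyadicWindow I m n, ENNReal.ofReal (c * ((2 : ℝ) ^ (-(1 + β))) ^ n) := by
        gcongr with k hk
        have hk := (Finset.mem_filter.1 hk).2
        rw [two_rpow_neg_pow, ← dyadic_add_one_sub n k,
          ← abs_of_pos (sub_pos.2 (dyadic_strictMono n (lt_add_one k)))]
        exact hZ _ hk.1 _ hk.2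
    _ = (dyadicWindow I m n).card * ENNReal.ofReal (c * ((2 : ℝ) ^ (-(1 + β))) ^ n) := by
        rw [Finset.sum_const, nsmul_eq_mul]
    _ ≤ ENNReal.ofReal (2 * m * 2 ^ n) * ENNReal.ofReal (c * ((2 : ℝ) ^ (-(1 + β))) ^ n) := by
        gcongr
        exact card_dyadicWindow_le I m n
    _ = ENNReal.ofReal (2 * m * c * ((2 : ℝ) ^ (-β)) ^ n) := by
        rw [← ENNReal.ofReal_mul (by positivity),
          show (2 : ℝ) ^ (-β) = 2 ^ (-(1 + β)) * 2 by
            rw [← Real.rpow_add_one two_ne_zero]; ring_nf]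
        ring_nf

lemma ae_dyadic_increments_le (hZ : KolmogorovMomentBound P Z I α β c)
    (hZm : ∀ t, Measurable (Z t)) (hα : 0 < α) {γ : ℝ} (hγ : γ * α < β) (m : ℕ) :
    ∀ᵐ ω ∂P, ∃ K ≥ 0, ∀ n k, dyadic n k ∈ I ∩ Icc (-m : ℝ) m →
      dyadic n (k + 1) ∈ I ∩ Icc (-m : ℝ) m →
      |Z (dyadic n (k + 1)) ω - Z (dyadic n k) ω| ≤ K * (2 ^ (-γ)) ^ n := by
  set q : ℕ → ℝ := fun n => ((2 : ℝ) ^ (-γ)) ^ n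
  set F : ℕ → Ω → ℝ≥0∞ := fun n ω => ENNReal.ofReal (q n ^ (-α)) * ∑ k ∈ dyadicWindow I m n,
    ENNReal.ofReal (|Z (dyadic n (k + 1)) ω - Z (dyadic n k) ω| ^ α)
  have hF : ∀ n, ∫⁻ ω, F n ω ∂P ≤ ENNReal.ofReal (2 * m * c * ((2 : ℝ) ^ (γ * α - β)) ^ n) := by
    intro n
    rw [lintegral_const_mul' _ _ ENNReal.ofReal_ne_top]
    refine (mul_le_mul_right (hZ.lintegral_sum_dyadicWindow_le hZm m n) _).trans_eq ?_
    rw [← ENNReal.ofReal_mul (by positivity), sub_eq_add_neg, Real.rpow_add two_pos]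
    simp only [q, two_rpow_pow_rpow, neg_mul_neg]
    ring_nf
  have hρ1 : (2 : ℝ) ^ (γ * α - β) < 1 :=
    Real.rpow_lt_one_of_one_lt_of_neg one_lt_two (by linarith)
  filter_upwards [ae_tsum_lt_top (fun n => by fun_prop) (ne_top_of_le_ne_top
    (tsum_ofReal_mul_pow_ne_top (by positivity) hρ1) (ENNReal.tsum_le_tsum hF))] with ω hω
  refine ⟨(∑' n, F n ω).toReal ^ α⁻¹, by positivity, fun n k hk hk1 => ?_⟩
  have hle : ENNReal.ofReal (q n ^ (-α)) *
      ENNReal.ofReal (|Z (dyadic n (k + 1)) ω - Z (dyadic n k) ω| ^ α) ≤ ∑' n, F n ω :=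
    (mul_le_mul_right (Finset.single_le_sum (fun _ _ => bot_le) (mem_dyadicWindow hk hk1)) _).trans
      (ENNReal.le_tsum (f := fun n => F n ω) n)
  have hq : 0 < q n := by positivity
  rw [← ENNReal.ofReal_mul (by positivity), ENNReal.ofReal_le_iff_le_toReal hω.ne,
    Real.rpow_neg hq.le, ← div_eq_inv_mul, ← Real.div_rpow (abs_nonneg _) hq.le,
    ← Real.le_rpow_inv_iff_of_pos (by positivity) ENNReal.toReal_nonneg hα, div_le_iff₀ hq] at hle
  exact hle

lemma ae_locally_holderOnWith_inter_dyadics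
    (hZ : KolmogorovMomentBound P Z I α β c) (hZm : ∀ t, Measurable (Z t)) (hI : I.OrdConnected)
    (hα : 0 < α) {γ : ℝ} (hγ : 0 < γ) (hγα : γ * α < β) {b : ℝ} (hb : ∀ t ω, |Z t ω| ≤ b) :
    ∀ᵐ ω ∂P, ∀ x, ∃ V ∈ 𝓝 x, ∃ C,
      HolderOnWith C γ.toNNReal (fun t => Z t ω) (I ∩ dyadics ∩ V) := by
  filter_upwards [ae_all_iff.2 (hZ.ae_dyadic_increments_le hZm hα hγα)] with ω hω x
  obtain ⟨m, hm⟩ := exists_nat_gt |x|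
  obtain ⟨K, hK, hinc⟩ := hω m
  obtain ⟨C, hC⟩ := exists_holderOnWith_of_dyadic_increments_le (hI.inter ordConnected_Icc) hK hγ
    hinc fun t _ => hb t ω
  refine ⟨Icc (-m) m, Icc_mem_nhds ?_ ?_, C, by rwa [inter_right_comm]⟩ <;>
    linarith [neg_abs_le x, le_abs_self x]

end KolmogorovMomentBound

end Moments

section Truncation

variable {Ω : Type*} [MeasurableSpace Ω] {P : Measure Ω} [IsProbabilityMeasure P]
  {X : ℝ → Ω → ℝ} {I : Set ℝ} {α β : ℝ}

lemma kolmogorovMomentBound_truncate (hX : ∀ t, Measurable (X t)) (hα : 0 < α) (hβ : -1 < β)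
    {M : ℝ} (hM : 0 ≤ M)
    (h : ∃ ε > (0 : ℝ), ∃ c > (0 : ℝ), ∀ s ∈ I, ∀ t ∈ I, |t - s| < ε →
      ∫ ω, |truncate M (X t ω) - truncate M (X s ω)| ^ α ∂P ≤ c * |t - s| ^ (1 + β)) :
    ∃ c, KolmogorovMomentBound P (fun t ω => truncate M (X t ω)) I α β c := by
  obtain ⟨ε, hε, c, hc, h⟩ := h
  refine ⟨(c + (2 * M) ^ α / ε ^ (1 + β)).toNNReal, fun s hs t ht => ?_⟩
  rw [Real.coe_toNNReal _ (by positivity)]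
  have hΔ : ∀ ω, |truncate M (X t ω) - truncate M (X s ω)| ^ α ≤ (2 * M) ^ α := fun ω => by
    refine Real.rpow_le_rpow (abs_nonneg _) ((abs_sub _ _).trans ?_) hα.le
    linarith [abs_truncate_le hM (X t ω), abs_truncate_le hM (X s ω)]
  rcases lt_or_ge |t - s| ε with hts | hts
  · have hint : Integrable (fun ω => |truncate M (X t ω) - truncate M (X s ω)| ^ α) P :=
      Integrable.of_bound (by fun_prop : Measurable _).aestronglyMeasurable _
        (ae_of_all _ fun ω => by rw [Real.norm_of_nonneg (by positivity)]; exact hΔ ω)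
    rw [← ofReal_integral_eq_lintegral_ofReal hint (ae_of_all _ fun ω => by positivity)]
    refine ENNReal.ofReal_le_ofReal ((h s hs t ht hts).trans ?_)
    gcongr
    exact le_add_of_nonneg_right (by positivity)
  · refine (lintegral_le_const (ae_of_all _ fun ω => ENNReal.ofReal_le_ofReal (hΔ ω))).trans
      (ENNReal.ofReal_le_ofReal ?_)
    have hε' : 0 < ε ^ (1 + β) := by positivity
    calc (2 * M) ^ α = (2 * M) ^ α / ε ^ (1 + β) * ε ^ (1 + β) := by field_simp
      _ ≤ (c + (2 * M) ^ α / ε ^ (1 + β)) * |t - s| ^ (1 + β) := by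
          gcongr
          · exact le_add_of_nonneg_left hc.le
          · linarith

lemma ae_exists_forall_abs_le (hX : ∀ t, Measurable (X t)) {J : Set ℝ} (hJ : J.Countable)
    (h : Tendsto (fun K : ℝ => (P {ω | ∀ t ∈ J, |X t ω| ≤ K}).toReal) atTop (𝓝 1)) :
    ∀ᵐ ω ∂P, ∃ k : ℕ, ∀ t ∈ J, |X t ω| ≤ k := by
  have hA : ∀ K : ℝ, MeasurableSet {ω | ∀ t ∈ J, |X t ω| ≤ K} := fun K => by
    simp only [ofPred_forall]
    exact MeasurableSet.biInter hJ fun t _ => measurableSet_le (by fun_prop) measurable_const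
  have hPB : 1 ≤ (P (⋃ k : ℕ, {ω | ∀ t ∈ J, |X t ω| ≤ k})).toReal :=
    le_of_tendsto' h fun K => ENNReal.toReal_mono (measure_ne_top _ _) (measure_mono
      fun ω hω => mem_iUnion.2 ⟨⌈K⌉₊, fun t ht => (hω t ht).trans (Nat.le_ceil K)⟩)
  have : ∀ᵐ ω ∂P, ω ∈ ⋃ k : ℕ, {ω | ∀ t ∈ J, |X t ω| ≤ k} := by
    refine (ae_iff_measure_eq (MeasurableSet.iUnion fun k : ℕ => hA k).nullMeasurableSet).2 ?_
    rw [measure_univ]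
    refine le_antisymm prob_le_one ?_
    rwa [← ENNReal.ofReal_one, ENNReal.ofReal_le_iff_le_toReal (measure_ne_top _ _)]
  simpa using this

end Truncation

lemma exists_seq_abs_sub_le_of_mem_closure {S : Set ℝ} {t : ℝ} (ht : t ∈ closure S) :
    ∃ u : ℕ → ℝ, (∀ n, u n ∈ S) ∧ ∀ n, |u n - t| ≤ (2 ^ n)⁻¹ := by
  choose u hu hut using fun n : ℕ => Metric.mem_closure_iff.1 ht (2 ^ n)⁻¹ (by positivity)
  exact ⟨u, hu, fun n => by rw [abs_sub_comm]; exact (hut n).le⟩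

lemma tendsto_of_abs_sub_le_inv_two_pow {u : ℕ → ℝ} {t : ℝ} (hut : ∀ n, |u n - t| ≤ (2 ^ n)⁻¹) :
    Tendsto u atTop (𝓝 t) := by
  refine tendsto_iff_norm_sub_tendsto_zero.2 (squeeze_zero (fun _ => norm_nonneg _) hut ?_)
  simpa only [inv_pow] using tendsto_pow_atTop_nhds_zero_of_lt_one (by norm_num : (0 : ℝ) ≤ 2⁻¹)
    (by norm_num)

noncomputable def natBoundOn (J : Set ℝ) (x : ℝ → ℝ) : ℕ := sInf {k : ℕ | ∀ s ∈ J, |x s| ≤ k}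

lemma abs_le_natBoundOn {J : Set ℝ} {x : ℝ → ℝ} (h : ∃ k : ℕ, ∀ s ∈ J, |x s| ≤ k) :
    ∀ s ∈ J, |x s| ≤ natBoundOn J x :=
  Nat.sInf_mem h

section Version

variable {Ω : Type*} [MeasurableSpace Ω] {P : Measure Ω}
  {X : ℝ → Ω → ℝ} {I D J : Set ℝ} {α β : ℝ}

lemma ae_limUnder_truncate_eq (hX : ∀ t, Measurable (X t)) {c : ℕ → ℝ≥0}
    (hmom : ∀ k : ℕ, KolmogorovMomentBound P (fun t ω => truncate (k + 1) (X t ω)) I α β (c k))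
    (hα : 0 < α) (hβ : -1 < β) (hDI : D ⊆ I) (hJI : J ⊆ I) {r : ℝ≥0} (hr : 0 < r)
    (hloc : ∀ᵐ ω ∂P, ∀ k : ℕ, ∀ x, ∃ V ∈ 𝓝 x, ∃ C,
      HolderOnWith C r (fun s => truncate (k + 1) (X s ω)) (D ∩ V))
    (hbdd : ∀ᵐ ω ∂P, ∃ k : ℕ, ∀ s ∈ J, |X s ω| ≤ k) {t : ℝ} (ht : t ∈ I) (htD : t ∈ closure D)
    (htJ : t ∈ closure J) :
    ∀ᵐ ω ∂P, limUnder (𝓝[D] t) (fun s => truncate (natBoundOn J (X · ω) + 1) (X s ω)) = X t ω := by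
  obtain ⟨u, huD, hut⟩ := exists_seq_abs_sub_le_of_mem_closure htD
  obtain ⟨v, hvJ, hvt⟩ := exists_seq_abs_sub_le_of_mem_closure htJ
  have hXm : ∀ k : ℕ, ∀ t, Measurable fun ω => truncate (k + 1) (X t ω) := fun k t => by fun_prop
  have hu := ae_all_iff.2 fun k => (hmom k).ae_tendsto (hXm k) hα hβ ht (fun n => hDI (huD n)) hut
  have hv := ae_all_iff.2 fun k => (hmom k).ae_tendsto (hXm k) hα hβ ht (fun n => hJI (hvJ n)) hvt
  filter_upwards [hloc, hbdd, hu, hv] with ω hloc hbdd hu hv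
  set k := natBoundOn J (X · ω)
  have hk := abs_le_natBoundOn hbdd
  obtain ⟨V, hV, C, hC⟩ := hloc k t
  have hlim : limUnder (𝓝[D] t) (fun s => truncate (k + 1) (X s ω)) = truncate (k + 1) (X t ω) :=
    tendsto_nhds_unique ((hC.tendsto_limUnder_nhdsWithin hr hV htD).comp
      (tendsto_nhdsWithin_iff.2 ⟨tendsto_of_abs_sub_le_inv_two_pow hut, Eventually.of_forall huD⟩))
      (hu k)
  have habs : |truncate (k + 1) (X t ω)| ≤ k := le_of_tendsto' (hv k).abs fun n =>
    (abs_truncate_le_abs (by positivity) _).trans (hk _ (hvJ n))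
  rw [hlim, truncate_eq_self_of_abs_truncate_lt (by linarith)]

lemma exists_locallyHolderOn_of_ae {Z : ℝ → Ω → ℝ} {r : ℝ≥0}
    (hZ : ∀ᵐ ω ∂P, LocallyHolderOn r (Z · ω) I) (hZX : ∀ t ∈ I, ∀ᵐ ω ∂P, Z t ω = X t ω) :
    ∃ Y : ℝ → Ω → ℝ, (∀ t ∈ I, ∀ᵐ ω ∂P, Y t ω = X t ω) ∧ ∀ ω, LocallyHolderOn r (Y · ω) I := by
  classical
  refine ⟨fun t ω => if LocallyHolderOn r (Z · ω) I then Z t ω else 0, fun t ht => ?_, fun ω => ?_⟩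
  · filter_upwards [hZ, hZX t ht] with ω hω hω'
    simp only [if_pos hω, hω']
  · by_cases hω : LocallyHolderOn r (Z · ω) I
    · simpa only [if_pos hω] using hω
    · simp only [if_neg hω]
      exact fun t _ => ⟨I, self_mem_nhdsWithin, 0, fun x _ y _ => by simp⟩

end Version

theorem kolmogorov_truncated_criterion_general
    {Ω : Type*} [MeasurableSpace Ω] (P : Measure Ω) [IsProbabilityMeasure P]
    (I : Set ℝ) (hI : I.OrdConnected)
    (X : ℝ → Ω → ℝ) (hX : ∀ t : ℝ, Measurable (X t))
    (h1 : ∃ J : Set ℝ, J ⊆ I ∧ J.Countable ∧ I ⊆ closure J ∧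
      Tendsto (fun K : ℝ => (P {ω | ∀ t ∈ J, |X t ω| ≤ K}).toReal) atTop (nhds 1))
    (α β : ℝ) (hα : 0 < α)
    (h2 : ∀ M : ℝ, 0 < M → ∃ ε > (0:ℝ), ∃ c > (0:ℝ), ∀ s ∈ I, ∀ t ∈ I, |t - s| < ε →
      (∫ ω, |max (-M) (min M (X t ω)) - max (-M) (min M (X s ω))| ^ α ∂P)
        ≤ c * |t - s| ^ (1 + β))
    (γ : ℝ) (hγ0 : 0 < γ) (hγ : γ < β / α) :
    ∃ Y : ℝ → Ω → ℝ,
      (∀ t ∈ I, ∀ᵐ ω ∂P, Y t ω = X t ω) ∧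
      ∀ ω : Ω, ∀ t ∈ I, ∃ U ∈ nhdsWithin t I, ∃ C : NNReal,
        HolderOnWith C (Real.toNNReal γ) (fun u => Y u ω) U := by
  obtain ⟨J, hJI, hJc, hIJ, hJ⟩ := h1
  rcases I.subsingleton_or_nontrivial with hIs | hIn
  · exact ⟨X, fun _ _ => ae_of_all _ fun _ => rfl,
      fun ω t _ => ⟨I, self_mem_nhdsWithin, 0, hIs.holderOnWith _ _ _⟩⟩
  have hγα : γ * α < β := (lt_div_iff₀ hα).1 hγ
  have hβ : -1 < β := by linarith [mul_pos hγ0 hα]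
  choose c hc using fun k : ℕ => kolmogorovMomentBound_truncate hX hα hβ (M := k + 1)
    (by positivity) (h2 (k + 1) (by positivity))
  set D := I ∩ dyadics
  have hloc : ∀ᵐ ω ∂P, ∀ k : ℕ, ∀ x, ∃ V ∈ 𝓝 x, ∃ C,
      HolderOnWith C γ.toNNReal (fun s => truncate (k + 1) (X s ω)) (D ∩ V) :=
    ae_all_iff.2 fun k => (hc k).ae_locally_holderOnWith_inter_dyadics (fun t => by fun_prop) hI
      hα hγ0 hγα fun t ω => abs_truncate_le (by positivity) _
  set Z : ℝ → Ω → ℝ := fun t ω =>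
    limUnder (𝓝[D] t) fun s => truncate (natBoundOn J (X · ω) + 1) (X s ω)
  have hID : I ⊆ closure D := hI.subset_closure_inter_dyadics hIn
  have hZ : ∀ᵐ ω ∂P, LocallyHolderOn γ.toNNReal (Z · ω) I := by
    filter_upwards [hloc] with ω hω
    exact (locallyHolderOn_limUnder_nhdsWithin (Real.toNNReal_pos.2 hγ0) fun x _ => hω _ x).mono hID
  have hZX : ∀ t ∈ I, ∀ᵐ ω ∂P, Z t ω = X t ω := fun t ht =>
    ae_limUnder_truncate_eq hX hc hα hβ inter_subset_left hJI (Real.toNNReal_pos.2 hγ0) hloc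
      (ae_exists_forall_abs_le hX hJc hJ) ht (hID ht) (hIJ ht)
  exact exists_locallyHolderOn_of_ae hZ hZX

/-- Kolmogorov-type continuity criterion with truncation.
`X^M(t) = max(−M, min(M, X(t)))` is the truncated process. If (1) `X` is bounded on a countable
dense subset `J` of the interval `I` with probability tending to `1`, and (2) the truncated
processes satisfy a Kolmogorov moment bound, then `X` has a version all of whose paths are
locally Hölder continuous on `I` with any exponent `γ ∈ (0, β/α)`. -/
theorem kolmogorov_truncated_criterion
    {Ω : Type*} [MeasurableSpace Ω] (P : Measure Ω) [IsProbabilityMeasure P]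
    (I : Set ℝ) (hI : I.OrdConnected)
    (X : ℝ → Ω → ℝ) (hX : ∀ t : ℝ, Measurable (X t))
    (h1 : ∃ J : Set ℝ, J ⊆ I ∧ J.Countable ∧ I ⊆ closure J ∧
      Tendsto (fun K : ℝ => (P {ω | ∀ t ∈ J, |X t ω| ≤ K}).toReal) atTop (nhds 1))
    (α β : ℝ) (hα : 0 < α) (hβ : 0 < β)
    (h2 : ∀ M : ℝ, 0 < M → ∃ ε > (0:ℝ), ∃ c > (0:ℝ), ∀ s ∈ I, ∀ t ∈ I, |t - s| < ε →
      (∫ ω, |max (-M) (min M (X t ω)) - max (-M) (min M (X s ω))| ^ α ∂P)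
        ≤ c * |t - s| ^ (1 + β))
    (γ : ℝ) (hγ0 : 0 < γ) (hγ : γ < β / α) :
    ∃ Y : ℝ → Ω → ℝ,
      (∀ t ∈ I, ∀ᵐ ω ∂P, Y t ω = X t ω) ∧
      ∀ ω : Ω, ∀ t ∈ I, ∃ U ∈ nhdsWithin t I, ∃ C : NNReal,
        HolderOnWith C (Real.toNNReal γ) (fun u => Y u ω) U :=
  kolmogorov_truncated_criterion_general P I hI X hX h1 α β hα h2 γ hγ0 hγ
end
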